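/- For every Fibonacci index k of order r+1, the word (C,D)^k contains exactly r occurrences of CD as a contiguous factor (i.e. exactly r positions p such that the letter at position p is C and the letter at position p+1 is D). -/
import Mathlib


/-- The two-letter alphabet. -/
inductive Letter : Type
  | C : Letter
  | D : Letter
deriving DecidableEq, Repr

open Letter

/-- The block `D^i C^j` corresponding to a pair `(i, j)`. -/
def block (p : ℕ × ℕ) : List Letter :=
  List.replicate p.1 D ++ List.replicate p.2 C

/-- A Fibonacci index is a nonempty list `k : List (ℕ × ℕ)`; the word `(C,D)^k`
is `D^{i_0}C^{j_0} ++ [C,D] ++ … ++ [C,D] ++ D^{i_r}C^{j_r}`. -/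
def cdWord (k : List (ℕ × ℕ)) : List Letter :=
  List.intercalate [C, D] (k.map block)

/-- The degree `2·Σ i_n + Σ j_n + 3r` of a Fibonacci index of order `r + 1`. -/
def degree (k : List (ℕ × ℕ)) : ℕ :=
  2 * (k.map Prod.fst).sum + (k.map Prod.snd).sum + 3 * (k.length - 1)

/-- The set of positions `p` at which `CD` occurs as a contiguous factor of `W`. -/
def cdOccs (W : List Letter) : Finset ℕ :=
  (Finset.range W.length).filter
    (fun p => W[p]? = some Letter.C ∧ W[p + 1]? = some Letter.D)

def ind (x y : Option Letter) : ℕ := if x = some C ∧ y = some D then 1 else 0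

def f : List Letter → ℕ
  | [] => 0
  | a :: l => f l + ind (some a) l.head?

lemma cdOccs_cons (a : Letter) (l : List Letter) :
    cdOccs (a :: l) = (cdOccs l).image (· + 1) ∪ (if a = C ∧ l.head? = some D then {0} else ∅) := by
  ext p
  simp only [cdOccs, Finset.mem_union, Finset.mem_filter, Finset.mem_range, Finset.mem_image]
  cases p with
  | zero =>
    simp only [List.length_cons, List.getElem?_cons_zero, List.getElem?_cons_succ]
    constructor
    · rintro ⟨-, h1, h2⟩
      right
      rw [if_pos ⟨by injection h1, by rw [show l.head? = l[0]? by cases l <;> simp]; exact h2⟩]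
      simp
    · rintro (⟨q, hq, h⟩ | h)
      · omega
      · split at h
        · next hc =>
          refine ⟨Nat.succ_pos _, by rw [hc.1], ?_⟩
          rw [show l[0]? = l.head? by cases l <;> simp]; exact hc.2
        · simp at h
  | succ q =>
    simp only [List.length_cons, List.getElem?_cons_succ]
    constructor
    · rintro ⟨h0, h1, h2⟩
      exact Or.inl ⟨q, ⟨by omega, h1, h2⟩, rfl⟩
    · rintro (⟨q', ⟨hq', h1, h2⟩, he⟩ | h)
      · obtain rfl : q' = q := by omega
        exact ⟨by omega, h1, h2⟩
      · split at h <;> simp at h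

lemma card_cdOccs (l : List Letter) : (cdOccs l).card = f l := by
  induction l with
  | nil => simp [cdOccs, f]
  | cons a l ih =>
    rw [cdOccs_cons, Finset.card_union_of_disjoint, Finset.card_image_of_injective _ (add_left_injective 1), ih, f, ind]
    · split
      · next h => simp [h]
      · next h => simp [h]
    · split
      · simp only [Finset.disjoint_singleton_right, Finset.mem_image]
        rintro ⟨q, -, h⟩; omega
      · simp

lemma f_append (l1 l2 : List Letter) :
    f (l1 ++ l2) = f l1 + f l2 + ind l1.getLast? l2.head? := by
  induction l1 with
  | nil => simp [f, ind]
  | cons a l1 ih =>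
    rcases l1 with _ | ⟨b, l1⟩
    · rcases l2 with _ | ⟨c, l2⟩
      · simp [f, ind]
      · simp [f, ind]
    · simp only [List.cons_append, f] at ih ⊢
      rw [ih]
      simp only [List.append_eq, List.cons_append, List.head?_cons, List.getLast?_cons_cons]
      ring

lemma f_replicate (n : ℕ) (a : Letter) : f (List.replicate n a) = 0 := by
  induction n with
  | zero => simp [f]
  | succ n ih =>
    rw [List.replicate_succ, f, ih, ind]
    rcases n with _ | n <;> cases a <;> simp [List.replicate_succ]

lemma f_block (p : ℕ × ℕ) : f (block p) = 0 := by
  rw [block, f_append, f_replicate, f_replicate, ind]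
  rcases p with ⟨i, j⟩
  rcases i with _ | i <;> simp [List.getLast?_replicate]

lemma f_cdWord (k : List (ℕ × ℕ)) : f (cdWord k) = k.length - 1 := by
  induction k with
  | nil => simp [cdWord, f]
  | cons p k ih =>
    rcases k with _ | ⟨q, k⟩
    · simp [cdWord, List.intercalate, f_block]
    · have : cdWord (p :: q :: k) = block p ++ ([C, D] ++ cdWord (q :: k)) := by
        simp [cdWord, List.intercalate, List.intersperse]
      rw [this, f_append, f_block, f_append]
      have hf : f [C, D] = 1 := by simp [f, ind]
      rw [hf]
      have h1 : ind (block p).getLast? ([C, D] ++ cdWord (q :: k)).head? = 0 := by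
        simp [ind]
      have h2 : ind ([C, D] : List Letter).getLast? (cdWord (q :: k)).head? = 0 := by
        simp [ind]
      rw [h1, h2, ih]
      simp [Nat.add_comm]

/-- The word `(C,D)^k` of a Fibonacci index of order `r + 1` contains exactly
`r` occurrences of `CD` as a contiguous factor. -/
theorem card_cdOccs_cdWord (k : List (ℕ × ℕ)) (hk : k ≠ []) :
    (cdOccs (cdWord k)).card = k.length - 1 := by
  rw [card_cdOccs, f_cdWord]
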